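/- Let A, B ⊆ ℕ. If the characteristic function of B is recursive in the characteristic function of A, then (H₀^B, H₁^B) is many-one reducible to (H₀^A, H₁^A). -/

import Mathlib

open Classical in
/-- The oracle game: the list of previous answers by Merlin up to stage `i`,
for the answer sequence `s`. -/
def prefixList (s : ℕ → ℕ) (i : ℕ) : List ℕ := List.ofFn (fun j : Fin i => s j)

/-- A winning Arthur+Nimue strategy for the reduction game of the basic oracle `ℱ`
to the basic oracle `𝒢`. -/
def Winning (ℱ 𝒢 : Set (Set ℕ)) (σ : List ℕ →. Option ℕ) (ν : Set ℕ → List ℕ → Set ℕ) : Prop :=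
  (∀ F ∈ ℱ, ∀ l : List ℕ, ν F l ∈ 𝒢) ∧
  ∀ F ∈ ℱ, ∀ s : ℕ → ℕ, (∀ i, s i ∈ ν F (prefixList s i)) →
    ∃ k, (∀ i ≤ k, (σ (prefixList s i)).Dom) ∧
      (∀ i < k, none ∈ σ (prefixList s i)) ∧
      ∃ u ∈ F, some u ∈ σ (prefixList s k)

/-- The encoding of an Arthur strategy as a partial function `ℕ →. ℕ`, via the
standard Mathlib encodings of `List ℕ` and `Option ℕ`. -/
def arthurCode (σ : List ℕ →. Option ℕ) : ℕ →. ℕ :=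
  fun n => (σ (Denumerable.ofNat (List ℕ) n)).map Encodable.encode

open Classical in
/-- The decoding oracle associated to the promise problem `(P, Q)`: value `0` on `P`,
value `1` on `Q`, undefined elsewhere. -/
noncomputable def dOracle (P Q : Set ℕ) : ℕ →. ℕ :=
  fun n => ⟨n ∈ P ∪ Q, fun _ => if n ∈ Q then 1 else 0⟩

open Classical in
/-- The characteristic function of a set of naturals. -/
noncomputable def chi (A : Set ℕ) : ℕ → ℕ := fun n => if n ∈ A then 1 else 0

/-- The coded cartesian product of two sets of naturals. -/
def tensor (P Q : Set ℕ) : Set ℕ := {x | ∃ p ∈ P, ∃ q ∈ Q, x = Nat.pair p q}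

infixl:70 " ⊗ " => tensor

/-- Oracle computability, as in Mathlib's `Nat.RecursiveIn`. -/
inductive Nat.RecursiveInO (g : ℕ →. ℕ) : (ℕ →. ℕ) → Prop
  | zero : Nat.RecursiveInO g fun _ => 0
  | succ : Nat.RecursiveInO g Nat.succ
  | left : Nat.RecursiveInO g fun n => (Nat.unpair n).1
  | right : Nat.RecursiveInO g fun n => (Nat.unpair n).2
  | oracle : Nat.RecursiveInO g g
  | pair {f h : ℕ →. ℕ} (hf : Nat.RecursiveInO g f) (hh : Nat.RecursiveInO g h) :
      Nat.RecursiveInO g fun n => (Nat.pair <$> f n <*> h n)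
  | comp {f h : ℕ →. ℕ} (hf : Nat.RecursiveInO g f) (hh : Nat.RecursiveInO g h) :
      Nat.RecursiveInO g fun n => h n >>= f
  | prec {f h : ℕ →. ℕ} (hf : Nat.RecursiveInO g f) (hh : Nat.RecursiveInO g h) :
      Nat.RecursiveInO g
        (Nat.unpaired fun a n =>
          n.rec (f a) fun y IH => do
            let i ← IH
            h (Nat.pair a (Nat.pair y i)))
  | rfind {f : ℕ →. ℕ} (hf : Nat.RecursiveInO g f) :
      Nat.RecursiveInO g fun a =>
        Nat.rfind fun n => (fun m => m = 0) <$> f (Nat.pair a n)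

/-- `f` is T1-reducible to `g`: some partial function recursive in the oracle `g`
extends `f`. -/
def T1Reducible (f g : ℕ →. ℕ) : Prop :=
  ∃ h : ℕ →. ℕ, Nat.RecursiveInO g h ∧ ∀ n : ℕ, ∀ a ∈ f n, a ∈ h n

/-- `f` is T1-computable: it has a partial computable extension. -/
def T1Computable (f : ℕ →. ℕ) : Prop :=
  ∃ h : ℕ →. ℕ, Nat.Partrec h ∧ ∀ n : ℕ, ∀ a ∈ f n, a ∈ h n

/-- Codes for oracle computations: Mathlib's `Nat.Partrec.Code` extended by an
`oracle` constructor. -/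
inductive OCode : Type
  | zero : OCode
  | succ : OCode
  | left : OCode
  | right : OCode
  | oracle : OCode
  | pair : OCode → OCode → OCode
  | comp : OCode → OCode → OCode
  | prec : OCode → OCode → OCode
  | rfind' : OCode → OCode

/-- Evaluation of an oracle code relative to the oracle `g`, by the same structural
recursion as Mathlib's `Nat.Partrec.Code.eval`. -/
def OCode.eval (g : ℕ →. ℕ) : OCode → ℕ →. ℕ
  | .zero => pure 0
  | .succ => Nat.succ
  | .left => ↑fun n : ℕ => n.unpair.1
  | .right => ↑fun n : ℕ => n.unpair.2
  | .oracle => g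
  | .pair cf cg => fun n => Nat.pair <$> cf.eval g n <*> cg.eval g n
  | .comp cf cg => fun n => cg.eval g n >>= cf.eval g
  | .prec cf cg =>
    Nat.unpaired fun a n =>
      n.rec (cf.eval g a) fun y IH => do
        let i ← IH
        cg.eval g (Nat.pair a (Nat.pair y i))
  | .rfind' cf =>
    Nat.unpaired fun a m =>
      (Nat.rfind fun n => (fun m => m = 0) <$> cf.eval g (Nat.pair a (n + m))).map (· + m)

/-- The `n`-th oracle code. -/
def OCode.ofNat : ℕ → OCode
  | 0 => .zero
  | 1 => .succ
  | 2 => .left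
  | 3 => .right
  | 4 => .oracle
  | n + 5 =>
    have h1 : (n / 4).unpair.1 < n + 5 :=
      lt_of_le_of_lt (le_trans (Nat.unpair_left_le _) (Nat.div_le_self _ _)) (by omega)
    have h2 : (n / 4).unpair.2 < n + 5 :=
      lt_of_le_of_lt (le_trans (Nat.unpair_right_le _) (Nat.div_le_self _ _)) (by omega)
    if n % 4 = 0 then .pair (OCode.ofNat (n / 4).unpair.1) (OCode.ofNat (n / 4).unpair.2)
    else if n % 4 = 1 then .comp (OCode.ofNat (n / 4).unpair.1) (OCode.ofNat (n / 4).unpair.2)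
    else if n % 4 = 2 then .prec (OCode.ofNat (n / 4).unpair.1) (OCode.ofNat (n / 4).unpair.2)
    else .rfind' (OCode.ofNat (n / 4).unpair.1)

/-- `φ_e^g`: the evaluation of the `e`-th oracle code relative to the oracle `g`. -/
def phi (g : ℕ →. ℕ) (e : ℕ) : ℕ →. ℕ := (OCode.ofNat e).eval g

/-- `H_i^A`: the set of (codes of) oracle programs which, run with the characteristic
function of `A` as oracle, halt on input `0` with output `i`. -/
def Hset (A : Set ℕ) (i : ℕ) : Set ℕ := {e : ℕ | (i : ℕ) ∈ phi (chi A) e 0}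

/-- Many-one reducibility of promise problems: `(P₂,Q₂)` is many-one reducible to
`(P₁,Q₁)` via a partial computable function defined on all of `P₂ ∪ Q₂`. -/
def PromiseMRed (P₂ Q₂ P₁ Q₁ : Set ℕ) : Prop :=
  ∃ f : ℕ →. ℕ, Nat.Partrec f ∧ (∀ n ∈ P₂ ∪ Q₂, (f n).Dom) ∧
    (∀ n ∈ P₂, ∀ a ∈ f n, a ∈ P₁) ∧ (∀ n ∈ Q₂, ∀ a ∈ f n, a ∈ Q₁)

/-! If `χ_B = φ_e^A`, replacing every oracle call in the code with index `n` by the code with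
index `e` yields a code whose evaluation relative to `A` is `φ_n^B`. On indices this substitution
is a primitive recursive map (course-of-values recursion along the decoding of `OCode.ofNat`),
and it sends `H_i^B` into `H_i^A`. -/

namespace OCode

/-- The inner node with tag `k` read off by `OCode.ofNat`; tag `3` (`rfind'`) ignores `b`. -/
def node (k : ℕ) (a b : OCode) : OCode :=
  if k = 0 then pair a b else if k = 1 then comp a b else if k = 2 then prec a b else rfind' a

lemma ofNat_add_five (n : ℕ) :
    ofNat (n + 5) = node (n % 4) (ofNat (n / 4).unpair.1) (ofNat (n / 4).unpair.2) := by
  rw [ofNat]; rfl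

lemma ofNat_node_index {k : ℕ} (hk : k < 4) (i j : ℕ) :
    ofNat (4 * Nat.pair i j + k + 5) = node k (ofNat i) (ofNat j) := by
  have hmod : (4 * Nat.pair i j + k) % 4 = k := by omega
  have hdiv : (4 * Nat.pair i j + k) / 4 = Nat.pair i j := by omega
  rw [ofNat_add_five, hmod, hdiv, Nat.unpair_pair]

lemma ofNat_surjective : Function.Surjective ofNat := by
  intro c
  induction c with
  | zero => exact ⟨0, by rw [ofNat]⟩
  | succ => exact ⟨1, by rw [ofNat]⟩
  | left => exact ⟨2, by rw [ofNat]⟩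
  | right => exact ⟨3, by rw [ofNat]⟩
  | oracle => exact ⟨4, by rw [ofNat]⟩
  | pair a b iha ihb =>
    obtain ⟨⟨i, rfl⟩, ⟨j, rfl⟩⟩ := And.intro iha ihb
    exact ⟨_, ofNat_node_index (k := 0) (by omega) i j⟩
  | comp a b iha ihb =>
    obtain ⟨⟨i, rfl⟩, ⟨j, rfl⟩⟩ := And.intro iha ihb
    exact ⟨_, ofNat_node_index (k := 1) (by omega) i j⟩
  | prec a b iha ihb =>
    obtain ⟨⟨i, rfl⟩, ⟨j, rfl⟩⟩ := And.intro iha ihb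
    exact ⟨_, ofNat_node_index (k := 2) (by omega) i j⟩
  | rfind' a iha =>
    obtain ⟨i, rfl⟩ := iha
    exact ⟨_, ofNat_node_index (k := 3) (by omega) i i⟩

def subst : OCode → OCode → OCode
  | .zero, _ => .zero
  | .succ, _ => .succ
  | .left, _ => .left
  | .right, _ => .right
  | .oracle, c => c
  | .pair a b, c => .pair (a.subst c) (b.subst c)
  | .comp a b, c => .comp (a.subst c) (b.subst c)
  | .prec a b, c => .prec (a.subst c) (b.subst c)
  | .rfind' a, c => .rfind' (a.subst c)

lemma node_subst (k : ℕ) (a b c : OCode) :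
    (node k a b).subst c = node k (a.subst c) (b.subst c) := by
  unfold node
  split_ifs <;> rfl

lemma eval_subst (g : ℕ →. ℕ) (e c : OCode) : (e.subst c).eval g = e.eval (c.eval g) := by
  induction e with
  | zero | succ | left | right | oracle => rfl
  | pair a b iha ihb => rw [subst, eval, eval, iha, ihb]
  | comp a b iha ihb => rw [subst, eval, eval, iha, ihb]
  | prec a b iha ihb => rw [subst, eval, eval, iha, ihb]
  | rfind' a iha => rw [subst, eval, eval, iha]

lemma exists_eval_eq {g f : ℕ →. ℕ} (h : Nat.RecursiveInO g f) : ∃ c : OCode, c.eval g = f := by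
  induction h with
  | zero => exact ⟨.zero, rfl⟩
  | succ => exact ⟨.succ, rfl⟩
  | left => exact ⟨.left, rfl⟩
  | right => exact ⟨.right, rfl⟩
  | oracle => exact ⟨.oracle, rfl⟩
  | pair _ _ ihf ihh =>
    obtain ⟨⟨cf, rfl⟩, ⟨ch, rfl⟩⟩ := And.intro ihf ihh
    exact ⟨.pair cf ch, rfl⟩
  | comp _ _ ihf ihh =>
    obtain ⟨⟨cf, rfl⟩, ⟨ch, rfl⟩⟩ := And.intro ihf ihh
    exact ⟨.comp cf ch, rfl⟩
  | prec _ _ ihf ihh =>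
    obtain ⟨⟨cf, rfl⟩, ⟨ch, rfl⟩⟩ := And.intro ihf ihh
    exact ⟨.prec cf ch, rfl⟩
  | rfind _ ihf =>
    obtain ⟨cf, rfl⟩ := ihf
    -- `rfind' cf` searches from the offset in the second coordinate, so start it at `0`
    refine ⟨.comp (.rfind' cf) (.pair (.pair .left .right) .zero), ?_⟩
    funext n
    simp [eval, Seq.seq, pure, PFun.pure, Part.map_id']

end OCode

lemma unpair_fst_div_four_lt (n : ℕ) : (n / 4).unpair.1 < n + 5 :=
  (Nat.unpair_left_le _).trans_lt (by omega)

lemma unpair_snd_div_four_lt (n : ℕ) : (n / 4).unpair.2 < n + 5 :=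
  (Nat.unpair_right_le _).trans_lt (by omega)

def substIndex (e : ℕ) : ℕ → ℕ
  | n + 5 =>
    have := unpair_fst_div_four_lt n
    have := unpair_snd_div_four_lt n
    4 * Nat.pair (substIndex e (n / 4).unpair.1) (substIndex e (n / 4).unpair.2) + n % 4 + 5
  | n => if n = 4 then e else n

lemma ofNat_substIndex (e n : ℕ) :
    OCode.ofNat (substIndex e n) = (OCode.ofNat n).subst (OCode.ofNat e) := by
  induction n using Nat.strong_induction_on with
  | _ n ih =>
    match n, ih with
    | 0, _ | 1, _ | 2, _ | 3, _ | 4, _ => simp [substIndex, OCode.ofNat, OCode.subst]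
    | m + 5, ih =>
      rw [substIndex, OCode.ofNat_node_index (Nat.mod_lt _ (by omega)), OCode.ofNat_add_five,
        OCode.node_subst, ih _ (unpair_fst_div_four_lt m), ih _ (unpair_snd_div_four_lt m)]

lemma exists_phi_eq {g f : ℕ →. ℕ} (h : Nat.RecursiveInO g f) : ∃ e, phi g e = f := by
  obtain ⟨c, rfl⟩ := OCode.exists_eval_eq h
  obtain ⟨e, rfl⟩ := OCode.ofNat_surjective c
  exact ⟨e, rfl⟩

lemma phi_substIndex (g : ℕ →. ℕ) (e n : ℕ) : phi g (substIndex e n) = phi (phi g e) n := by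
  rw [phi, ofNat_substIndex, OCode.eval_subst, phi, phi]

lemma primrec₂_substIndex : Primrec₂ substIndex := by
  -- one course-of-values step: the list holds the values of `substIndex e` below its length
  let step (e : ℕ) (l : List ℕ) : ℕ :=
    if l.length < 5 then (if l.length = 4 then e else l.length) else
      4 * Nat.pair (l.getD ((l.length - 5) / 4).unpair.1 0) (l.getD ((l.length - 5) / 4).unpair.2 0)
        + (l.length - 5) % 4 + 5
  have hstep : Primrec₂ step := by
    open Primrec in
    have hlen : Primrec fun p : ℕ × List ℕ => p.2.length := list_length.comp snd
    have hm : Primrec fun p : ℕ × List ℕ => p.2.length - 5 := nat_sub.comp hlen (const 5)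
    have hu : Primrec fun p : ℕ × List ℕ => ((p.2.length - 5) / 4).unpair :=
      unpair.comp (nat_div.comp hm (const 4))
    have hnode : Primrec fun p : ℕ × List ℕ =>
        4 * Nat.pair (p.2.getD ((p.2.length - 5) / 4).unpair.1 0)
          (p.2.getD ((p.2.length - 5) / 4).unpair.2 0) + (p.2.length - 5) % 4 + 5 :=
      nat_add.comp (nat_add.comp (nat_mul.comp (const 4) (Primrec₂.natPair.comp
        ((list_getD 0).comp snd (fst.comp hu)) ((list_getD 0).comp snd (snd.comp hu))))
        (nat_mod.comp hm (const 4))) (const 5)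
    exact (ite (nat_lt.comp hlen (const 5))
      (ite (Primrec.eq.comp hlen (const 4)) fst hlen) hnode).to₂
  refine Primrec.nat_strong_rec _ (Primrec.option_some.comp₂ hstep) fun e n => ?_
  have hget : ∀ i < n, ((List.range n).map (substIndex e)).getD i 0 = substIndex e i := by
    intro i hi
    simp [List.getD_eq_getElem?_getD, List.getElem?_range hi]
  match n, hget with
  | 0, _ | 1, _ | 2, _ | 3, _ | 4, _ => simp [step, substIndex]
  | m + 5, hget =>
    simp only [step, List.length_map, List.length_range, Nat.add_sub_cancel, Option.some_inj,
      hget _ (unpair_fst_div_four_lt m), hget _ (unpair_snd_div_four_lt m)]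
    rw [substIndex, if_neg (by omega)]

lemma promiseMRed_of_primrec {P₂ Q₂ P₁ Q₁ : Set ℕ} {f : ℕ → ℕ} (hf : Primrec f)
    (hP : ∀ n ∈ P₂, f n ∈ P₁) (hQ : ∀ n ∈ Q₂, f n ∈ Q₁) : PromiseMRed P₂ Q₂ P₁ Q₁ :=
  ⟨fun n => Part.some (f n), Partrec.nat_iff.1 hf.to_comp.partrec, fun _ _ => trivial,
    fun n hn _ ha => Part.mem_some_iff.1 ha ▸ hP n hn,
    fun n hn _ ha => Part.mem_some_iff.1 ha ▸ hQ n hn⟩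

theorem stmt14 (A B : Set ℕ) (hred : Nat.RecursiveInO ↑(chi A) ↑(chi B)) :
    PromiseMRed (Hset B 0) (Hset B 1) (Hset A 0) (Hset A 1) := by
  obtain ⟨e, he⟩ := exists_phi_eq hred
  have hH (i n : ℕ) : substIndex e n ∈ Hset A i ↔ n ∈ Hset B i := by
    show i ∈ phi _ (substIndex e n) 0 ↔ i ∈ phi _ n 0
    rw [phi_substIndex, he]
  exact promiseMRed_of_primrec (primrec₂_substIndex.comp (.const e) .id)
    (fun n hn => (hH 0 n).2 hn) (fun n hn => (hH 1 n).2 hn)
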